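/- If there exists δ > 0 such that b(x) ≤ δ·x for all x ∈ [0, aβ], then β·C(β) ≥ 1/(δ·a). -/

import Mathlib

/-!
Write `k y = b(aβy)` and `w = cIntegrand k`, so that `C(β) = ∫₀¹ w`.
Since `∫ₛˣ dy/(1-y) = log((1-s)/(1-x))`, a bound `k ≤ c` on `[s, x]` gives
`w x ≥ w s ((1-x)/(1-s))^(c-1)`, and a bound `k ≥ m` gives the reverse inequality with `m`.
The domination hypothesis gives `k ≤ δaβ` on `[0, 1)`, hence
`C(β) ≥ ∫₀¹ (1-x)^(δaβ-1) = 1/(δaβ)`.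
For this comparison of integrals `w` has to be integrable, which follows from
`k ≥ b(aβ/2) > 0` on `[1/2, 1)`: there `w` is dominated by a multiple of `(1-x)^(b(aβ/2)-1)`.
-/

open MeasureTheory Real Filter Set

/-- `C(β) = ∫₀¹ (1-x)⁻¹ exp(-∫₀ˣ b(aβy)/(1-y) dy) dx`. -/
noncomputable def Cfun (a : ℝ) (b : ℝ → ℝ) (β : ℝ) : ℝ :=
  ∫ x in (0:ℝ)..1, (1 - x)⁻¹ * Real.exp (-∫ y in (0:ℝ)..x, b (a * β * y) / (1 - y))

noncomputable def cIntegrand (k : ℝ → ℝ) (x : ℝ) : ℝ :=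
  (1 - x)⁻¹ * exp (-∫ y in (0:ℝ)..x, k y / (1 - y))

lemma integral_const_div_one_sub (c : ℝ) {s x : ℝ} (hs : s < 1) (hx : x < 1) :
    ∫ y in s..x, c / (1 - y) = c * log ((1 - s) / (1 - x)) := by
  simp_rw [div_eq_mul_inv c]
  rw [intervalIntegral.integral_const_mul,
    intervalIntegral.integral_comp_sub_left (fun z : ℝ => z⁻¹) 1, integral_inv]
  intro h0
  rcases mem_uIcc.1 h0 with ⟨h1, _⟩ | ⟨h1, _⟩ <;> linarith

lemma integral_one_sub_rpow_sub_one {c : ℝ} (hc : 0 < c) :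
    ∫ x in (0:ℝ)..1, (1 - x) ^ (c - 1) = c⁻¹ := by
  rw [intervalIntegral.integral_comp_sub_left (fun z : ℝ => z ^ (c - 1)) 1,
    integral_rpow (Or.inl (by linarith))]
  simp [zero_rpow hc.ne']

lemma intervalIntegrable_one_sub_rpow {r : ℝ} (hr : -1 < r) (s : ℝ) :
    IntervalIntegrable (fun x : ℝ => (1 - x) ^ r) volume s 1 := by
  simpa using ((intervalIntegral.intervalIntegrable_rpow' (a := 0) (b := 1 - s) hr).comp_sub_left
    1).symm

lemma inv_rpow_sub_one_eq {r : ℝ} (hr : 0 < r) (c : ℝ) :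
    r⁻¹ ^ (c - 1) = r * exp (-(c * log r)) := by
  rw [inv_rpow hr.le, rpow_sub_one hr.ne', rpow_def_of_pos hr, exp_neg, mul_comm (log r)]
  field_simp

section

variable {k : ℝ → ℝ}

@[simp]
lemma cIntegrand_zero : cIntegrand k 0 = 1 := by
  simp [cIntegrand]

lemma cIntegrand_pos {x : ℝ} (hx : x < 1) : 0 < cIntegrand k x :=
  mul_pos (inv_pos.2 (sub_pos.2 hx)) (exp_pos _)

lemma continuousOn_div_one_sub (hk : Continuous k) :
    ContinuousOn (fun y => k y / (1 - y)) (Iio 1) :=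
  hk.continuousOn.div (by fun_prop) fun _ hy => (sub_pos.2 hy).ne'

lemma intervalIntegrable_div_one_sub (hk : Continuous k) {s x : ℝ} (hs : s < 1)
    (hx : x < 1) :
    IntervalIntegrable (fun y => k y / (1 - y)) volume s x :=
  ((continuousOn_div_one_sub hk).mono fun _ hy => hy.2.trans_lt (max_lt hs hx)).intervalIntegrable

lemma integral_div_one_sub_le (hk : Continuous k) {c s x : ℝ} (hsx : s ≤ x) (hx : x < 1)
    (hkc : ∀ y ∈ Icc s x, k y ≤ c) :
    ∫ y in s..x, k y / (1 - y) ≤ c * log ((1 - s) / (1 - x)) := by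
  have hs := hsx.trans_lt hx
  rw [← integral_const_div_one_sub c hs hx]
  refine intervalIntegral.integral_mono_on hsx (intervalIntegrable_div_one_sub hk hs hx)
    (intervalIntegrable_div_one_sub continuous_const hs hx) fun y hy => ?_
  exact div_le_div_of_nonneg_right (hkc y hy) (by linarith [hy.2])

lemma le_integral_div_one_sub (hk : Continuous k) {m s x : ℝ} (hsx : s ≤ x) (hx : x < 1)
    (hkm : ∀ y ∈ Icc s x, m ≤ k y) :
    m * log ((1 - s) / (1 - x)) ≤ ∫ y in s..x, k y / (1 - y) := by
  have hs := hsx.trans_lt hx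
  rw [← integral_const_div_one_sub m hs hx]
  refine intervalIntegral.integral_mono_on hsx
    (intervalIntegrable_div_one_sub continuous_const hs hx)
    (intervalIntegrable_div_one_sub hk hs hx) fun y hy => ?_
  exact div_le_div_of_nonneg_right (hkm y hy) (by linarith [hy.2])

lemma cIntegrand_eq_mul_exp (hk : Continuous k) {s x : ℝ} (hs : s < 1) (hx : x < 1) :
    cIntegrand k x =
      cIntegrand k s * ((1 - s) / (1 - x)) * exp (-∫ y in s..x, k y / (1 - y)) := by
  have h1s : 1 - s ≠ 0 := (sub_pos.2 hs).ne'
  have h1x : 1 - x ≠ 0 := (sub_pos.2 hx).ne'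
  rw [cIntegrand, cIntegrand, ← intervalIntegral.integral_add_adjacent_intervals
    (intervalIntegrable_div_one_sub hk zero_lt_one hs) (intervalIntegrable_div_one_sub hk hs hx),
    neg_add, exp_add]
  field_simp

lemma cIntegrand_mul_rpow_le (hk : Continuous k) {c s x : ℝ} (hsx : s ≤ x) (hx : x < 1)
    (hkc : ∀ y ∈ Icc s x, k y ≤ c) :
    cIntegrand k s * ((1 - x) / (1 - s)) ^ (c - 1) ≤ cIntegrand k x := by
  have hs := hsx.trans_lt hx
  have hr : 0 < (1 - s) / (1 - x) := div_pos (sub_pos.2 hs) (sub_pos.2 hx)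
  rw [cIntegrand_eq_mul_exp hk hs hx, ← inv_div (1 - s) (1 - x), inv_rpow_sub_one_eq hr,
    mul_assoc]
  gcongr
  · exact (cIntegrand_pos hs).le
  · exact integral_div_one_sub_le hk hsx hx hkc

lemma cIntegrand_le_mul_rpow (hk : Continuous k) {m s x : ℝ} (hsx : s ≤ x) (hx : x < 1)
    (hkm : ∀ y ∈ Icc s x, m ≤ k y) :
    cIntegrand k x ≤ cIntegrand k s * ((1 - x) / (1 - s)) ^ (m - 1) := by
  have hs := hsx.trans_lt hx
  have hr : 0 < (1 - s) / (1 - x) := div_pos (sub_pos.2 hs) (sub_pos.2 hx)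
  rw [cIntegrand_eq_mul_exp hk hs hx, ← inv_div (1 - s) (1 - x), inv_rpow_sub_one_eq hr,
    mul_assoc]
  gcongr
  · exact (cIntegrand_pos hs).le
  · exact le_integral_div_one_sub hk hsx hx hkm

lemma continuousOn_cIntegrand (hk : Continuous k) : ContinuousOn (cIntegrand k) (Iio 1) := by
  intro x hx
  have hI : HasDerivAt (fun u => ∫ y in (0:ℝ)..u, k y / (1 - y)) (k x / (1 - x)) x :=
    intervalIntegral.integral_hasDerivAt_right
      (intervalIntegrable_div_one_sub hk zero_lt_one hx)
      ((continuousOn_div_one_sub hk).stronglyMeasurableAtFilter isOpen_Iio x hx)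
      ((continuousOn_div_one_sub hk).continuousAt (isOpen_Iio.mem_nhds hx))
  have h1x : 1 - x ≠ 0 := (sub_pos.2 hx).ne'
  have hIc := hI.continuousAt
  refine ContinuousAt.continuousWithinAt ?_
  unfold cIntegrand
  fun_prop (disch := exact h1x)

lemma intervalIntegrable_cIntegrand (hk : Continuous k) {m s : ℝ} (hm : 0 < m) (hs : s < 1)
    (hkm : ∀ y ∈ Ico s 1, m ≤ k y) : IntervalIntegrable (cIntegrand k) volume 0 1 := by
  have hleft : IntervalIntegrable (cIntegrand k) volume 0 s :=
    ((continuousOn_cIntegrand hk).mono fun _ hy =>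
      hy.2.trans_lt (max_lt zero_lt_one hs)).intervalIntegrable
  refine hleft.trans ?_
  have hdom := (intervalIntegrable_one_sub_rpow (by linarith : -1 < m - 1) s).const_mul
    (cIntegrand k s / (1 - s) ^ (m - 1))
  rw [intervalIntegrable_iff_integrableOn_Ioo_of_le hs.le] at hdom ⊢
  refine hdom.mono' (((continuousOn_cIntegrand hk).mono fun _ hy => hy.2).aestronglyMeasurable
    measurableSet_Ioo) (ae_restrict_of_forall_mem measurableSet_Ioo fun x hx => ?_)
  rw [norm_of_nonneg (cIntegrand_pos hx.2).le, div_mul_comm, mul_comm,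
    ← div_rpow (by linarith [hx.2]) (by linarith)]
  exact cIntegrand_le_mul_rpow hk hx.1.le hx.2 fun y hy => hkm y ⟨hy.1, hy.2.trans_lt hx.2⟩

lemma inv_le_integral_cIntegrand (hk : Continuous k)
    (hint : IntervalIntegrable (cIntegrand k) volume 0 1) {c : ℝ} (hc : 0 < c)
    (hkc : ∀ y ∈ Ico 0 1, k y ≤ c) : c⁻¹ ≤ ∫ x in (0:ℝ)..1, cIntegrand k x := by
  rw [← integral_one_sub_rpow_sub_one hc]
  refine intervalIntegral.integral_mono_on_of_le_Ioo zero_le_one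
    (intervalIntegrable_one_sub_rpow (by linarith) 0) hint fun x hx => ?_
  simpa using
    cIntegrand_mul_rpow_le hk hx.1.le hx.2 fun y hy => hkc y ⟨hy.1, hy.2.trans_lt hx.2⟩

end

theorem betaC_lower_bound_of_linear_domination_general
    (a : ℝ) (ha : 0 < a) (b : ℝ → ℝ)
    (hb_cont : Continuous b) (hb_mono : MonotoneOn b (Set.Ici 0))
    (hb_pos : ∀ x > (0:ℝ), 0 < b x)
    (β δ : ℝ) (hβ : 0 < β) (hδ : 0 < δ)
    (hdom : ∀ x ∈ Set.Icc (0:ℝ) (a * β), b x ≤ δ * x) :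
    1 / (δ * a) ≤ β * Cfun a b β := by
  set k : ℝ → ℝ := fun y => b (a * β * y)
  have haβ : 0 < a * β := mul_pos ha hβ
  have hk : Continuous k := by fun_prop
  have hk_le : ∀ y ∈ Ico (0:ℝ) 1, k y ≤ δ * (a * β) := fun y hy =>
    have hy' : a * β * y ≤ a * β := mul_le_of_le_one_right haβ.le hy.2.le
    calc k y ≤ δ * (a * β * y) := hdom _ ⟨by have := hy.1; positivity, hy'⟩
      _ ≤ δ * (a * β) := by gcongr
  have hk_ge : ∀ y ∈ Ico (1 / 2 : ℝ) 1, b (a * β / 2) ≤ k y := fun y hy =>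
    hb_mono (by simp only [mem_Ici]; positivity) (by simp only [mem_Ici]; nlinarith [hy.1])
      (by nlinarith [hy.1])
  have hint := intervalIntegrable_cIntegrand hk (hb_pos _ (by positivity)) (by norm_num) hk_ge
  have hC : (δ * (a * β))⁻¹ ≤ Cfun a b β :=
    inv_le_integral_cIntegrand hk hint (by positivity) hk_le
  calc 1 / (δ * a) = β * (δ * (a * β))⁻¹ := by field_simp
    _ ≤ β * Cfun a b β := by gcongr

/-- if there exists `δ > 0` with `b(x) ≤ δ x` for all
`x ∈ [0, aβ]`, then `β C(β) ≥ 1/(δ a)`. -/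
theorem betaC_lower_bound_of_linear_domination
    (a : ℝ) (ha : 0 < a) (b : ℝ → ℝ)
    (hb_cont : Continuous b) (hb_mono : MonotoneOn b (Set.Ici 0))
    (hb0 : 0 ≤ b 0) (hb_pos : ∀ x > (0:ℝ), 0 < b x)
    (β δ : ℝ) (hβ : 0 < β) (hδ : 0 < δ)
    (hdom : ∀ x ∈ Set.Icc (0:ℝ) (a * β), b x ≤ δ * x) :
    1 / (δ * a) ≤ β * Cfun a b β :=
  betaC_lower_bound_of_linear_domination_general a ha b hb_cont hb_mono hb_pos β δ hβ hδ hdom
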